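/- Let (X, Y) be a 2-separation of a connected matroid M and let N be a 3-connected minor of M. Then at least one of X and Y, say U, satisfies |U ∩ E(N)| ≤ 1; moreover, for any u ∈ U, if M/u is connected then M/u has an N-minor, and if M\u is connected then M\u has an N-minor. -/

import Mathlib

open Set Matroid

variable {α β : Type*}

namespace NDP

/-- The rank of a set `X` in a matroid `M`: the largest cardinality of an
independent subset of `X` (intended for finite matroids). -/
noncomputable def rk (M : Matroid α) (X : Set α) : ℕ :=
  sSup {n : ℕ | ∃ I, M.Indep I ∧ I ⊆ X ∧ I.ncard = n}

/-- The connectivity function `λ_M(X) = r(X) + r(E − X) − r(M)`, valued in `ℤ`. -/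
noncomputable def lam (M : Matroid α) (X : Set α) : ℤ :=
  (rk M X : ℤ) + (rk M (M.E \ X) : ℤ) - (rk M M.E : ℤ)

/-- Deletion of a set of elements. -/
def delete (M : Matroid α) (D : Set α) : Matroid α := M ↾ (M.E \ D)

/-- Contraction of a set of elements, defined by duality. -/
def contract (M : Matroid α) (C : Set α) : Matroid α := (delete M✶ C)✶

/-- `X` is a `k`-separating set of `M`. -/
def Separating (M : Matroid α) (k : ℕ) (X : Set α) : Prop :=
  X ⊆ M.E ∧ lam M X ≤ (k : ℤ) - 1

/-- `X` is exactly `k`-separating in `M`. -/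
def ExactlySeparating (M : Matroid α) (k : ℕ) (X : Set α) : Prop :=
  X ⊆ M.E ∧ lam M X = (k : ℤ) - 1

/-- `(X, M.E \ X)` is a `k`-separation of `M`. -/
def IsKSeparation (M : Matroid α) (k : ℕ) (X : Set α) : Prop :=
  Separating M k X ∧ k ≤ X.ncard ∧ k ≤ (M.E \ X).ncard

/-- A matroid is connected if it has no 1-separations. -/
def Connected (M : Matroid α) : Prop := ∀ X, ¬ IsKSeparation M 1 X

/-- A matroid is 3-connected if it has no k-separations for k < 3. -/
def ThreeConnected (M : Matroid α) : Prop := ∀ k < 3, ∀ X, ¬ IsKSeparation M k X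

/-- A circuit: a minimal dependent set. -/
def Circuit (M : Matroid α) (C : Set α) : Prop :=
  C ⊆ M.E ∧ ¬ M.Indep C ∧ ∀ D, D ⊂ C → M.Indep D

def Cocircuit (M : Matroid α) (C : Set α) : Prop := Circuit M✶ C

def Triangle (M : Matroid α) (T : Set α) : Prop := Circuit M T ∧ T.ncard = 3

def Triad (M : Matroid α) (T : Set α) : Prop := Cocircuit M T ∧ T.ncard = 3

/-- `N` is a minor of `M`. -/
def Minor (N M : Matroid α) : Prop := ∃ C D, N = delete (contract M C) D

/-- `M` has a minor isomorphic to `N`. -/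
def IsoMinor (M : Matroid α) (N : Matroid β) : Prop :=
  ∃ (f : β → α) (hf : Set.InjOn f N.E), Minor (N.map f hf) M

/-- `X` is a set of representatives for the simplification of `M`:
one non-loop element from each parallel class. -/
def SimpRep (M : Matroid α) (X : Set α) : Prop :=
  X ⊆ M.E ∧ (∀ e ∈ X, M.Indep {e}) ∧
  (∀ e ∈ M.E, M.Indep {e} → ∃ f ∈ X, f ∈ M.closure {e}) ∧
  (∀ f ∈ X, ∀ g ∈ X, f ∈ M.closure {g} → f = g)

/-- `si M` (the simplification of `M`) is a 3-connected matroid. -/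
def SiThreeConnected (M : Matroid α) : Prop :=
  ∀ X, SimpRep M X → ThreeConnected (M ↾ X)

/-- `co M` (the cosimplification of `M`) is a 3-connected matroid. -/
def CoThreeConnected (M : Matroid α) : Prop := SiThreeConnected M✶

/-- The restriction of `M` to `P` is isomorphic to the rank-`r` uniform matroid on `P`. -/
def UnifRestr (M : Matroid α) (r : ℕ) (P : Set α) : Prop :=
  P ⊆ M.E ∧ ∀ X ⊆ P, (M.Indep X ↔ X.ncard ≤ r)

/-- A set is fully closed if it is closed in `M` and in `M✶`. -/
def FullClosed (M : Matroid α) (F : Set α) : Prop :=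
  M.closure F = F ∧ M✶.closure F = F

/-- The full closure of `X`: the intersection of all fully closed sets containing `X`. -/
def fcl (M : Matroid α) (X : Set α) : Set α :=
  ⋂₀ {F | X ⊆ F ∧ FullClosed M F}

/-- `(X, {z}, Y)` is a vertical 3-separation of `M`. -/
def VertThreeSep (M : Matroid α) (X : Set α) (z : α) (Y : Set α) : Prop :=
  X ∪ {z} ∪ Y = M.E ∧ Disjoint X Y ∧ z ∉ X ∧ z ∉ Y ∧
  IsKSeparation M 3 (X ∪ {z}) ∧ 3 ≤ rk M (X ∪ {z}) ∧ 3 ≤ rk M Y ∧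
  IsKSeparation M 3 X ∧ 3 ≤ rk M X ∧ 3 ≤ rk M (Y ∪ {z}) ∧
  z ∈ M.closure X ∧ z ∈ M.closure Y

/-- `M` is a wheel or a whirl: its ground set has a cyclic ordering of alternating
spokes and rims in which consecutive triples are alternately triangles and triads. -/
def IsWheelOrWhirl (M : Matroid α) : Prop :=
  ∃ (n : ℕ) (s r : ZMod n → α), 2 ≤ n ∧
    Function.Injective (fun p : ZMod n × Bool => if p.2 then s p.1 else r p.1) ∧
    Set.range s ∪ Set.range r = M.E ∧
    ∀ i : ZMod n, Triangle M {s i, r i, s (i + 1)} ∧ Triad M {r i, s (i + 1), r (i + 1)}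

/-- `f` (restricted to `{0, …, k−1}`) is a fan ordering of length `k` in `M`. -/
def IsFanOrd (M : Matroid α) (k : ℕ) (f : ℕ → α) : Prop :=
  3 ≤ k ∧ Set.InjOn f (Set.Iio k) ∧ (∀ i < k, f i ∈ M.E) ∧
  (Triangle M {f 0, f 1, f 2} ∨ Triad M {f 0, f 1, f 2}) ∧
  ∀ i, i + 3 < k →
    (Triangle M {f i, f (i+1), f (i+2)} → Triad M {f (i+1), f (i+2), f (i+3)}) ∧
    (Triad M {f i, f (i+1), f (i+2)} → Triangle M {f (i+1), f (i+2), f (i+3)})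

/-- `F` is a fan of `M`. -/
def IsFan (M : Matroid α) (F : Set α) : Prop :=
  ∃ k f, IsFanOrd M k f ∧ F = f '' Set.Iio k

/-- `F` is a maximal fan of `M`. -/
def IsMaximalFan (M : Matroid α) (F : Set α) : Prop :=
  IsFan M F ∧ ∀ F', IsFan M F' → F ⊆ F' → F' = F

end NDP

/-!
Let `Y = E(M) \ X`. Since `λ(X) ≤ 1`, the local connectivity `⊓(A, S) = r(A) + r(S) - r(A ∪ S)`
of sets `A ⊆ Y`, `S ⊆ X` factorizes as `⊓(A, X) * ⊓(S, Y)`, both factors being `0` or `1`: this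
is the rank formula of a 2-sum. Write `N = M ／ C ＼ D`. If `X` meets `E(N)` in at most one
element, the rank function of `N` sees `C ∩ X` only through `⊓(C ∩ X, Y)` and, when
`X ∩ E(N) = {x}`, through the jump of `⊓(·, Y)` caused by adding `x`, which must go from `0` to
`1` since `x` is neither a loop nor a coloop of `N`. Any other set `C₁ ⊆ X` with the same profile,
with `x` relabelled to a suitable `x'` and the rest of `X` deleted, yields the same minor.
If `M ／ u` is connected then `⊓({u}, Y) = 0`, so `C₁` can be chosen to contain `u`; if `M ＼ u`
is connected then `⊓(X \ {u}, Y) = 1`, so `C₁` and `x'` can be chosen inside `X \ {u}`.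
Finally, `λ` does not increase under taking minors, so by the 3-connectivity of `N` one side of
the 2-separation meets `E(N)` in at most one element.
-/

namespace NDP

variable {M : Matroid α} {A B C D S X Y : Set α}

section Rank

variable (M) [M.Finite]

lemma cast_rk (X : Set α) : (rk M X : ℕ∞) = M.eRk X := by
  obtain ⟨I, hI⟩ := M.exists_isBasis' X
  have hfin : ∀ J, M.Indep J → J.Finite := fun J hJ ↦ M.ground_finite.subset hJ.subset_ground
  suffices rk M X = I.ncard by rw [this, (hfin I hI.indep).cast_ncard_eq, hI.encard_eq_eRk]
  refine le_antisymm (csSup_le ⟨_, I, hI.indep, hI.subset, rfl⟩ ?_)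
    (le_csSup ⟨M.E.ncard, ?_⟩ ⟨I, hI.indep, hI.subset, rfl⟩)
  · rintro _ ⟨J, hJ, hJX, rfl⟩
    have h := hJ.encard_le_eRk_of_subset hJX
    rwa [← hI.encard_eq_eRk, ← (hfin J hJ).cast_ncard_eq, ← (hfin I hI.indep).cast_ncard_eq,
      Nat.cast_le] at h
  · rintro _ ⟨J, hJ, -, rfl⟩
    exact ncard_le_ncard hJ.subset_ground M.ground_finite

lemma rk_mono (h : X ⊆ Y) : rk M X ≤ rk M Y := by
  exact_mod_cast (cast_rk M X).trans_le ((M.eRk_mono h).trans_eq (cast_rk M Y).symm)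

lemma rk_inter_add_rk_union_le (X Y : Set α) :
    rk M (X ∩ Y) + rk M (X ∪ Y) ≤ rk M X + rk M Y := by
  have h := M.eRk_inter_add_eRk_union_le X Y
  rw [← cast_rk, ← cast_rk, ← cast_rk, ← cast_rk] at h
  exact_mod_cast h

lemma rk_union_le (X Y : Set α) :
    rk M (X ∪ Y) ≤ rk M X + rk M Y :=
  (Nat.le_add_left _ _).trans (rk_inter_add_rk_union_le M X Y)

lemma rk_empty : rk M ∅ = 0 := by
  exact_mod_cast (cast_rk M ∅).trans M.eRk_empty

lemma rk_singleton_le (e : α) : rk M {e} ≤ 1 := by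
  exact_mod_cast (cast_rk M {e}).trans_le (M.eRk_singleton_le e)

lemma rk_insert_le (e : α) (X : Set α) :
    rk M (insert e X) ≤ rk M X + 1 := by
  rw [insert_eq, union_comm]
  exact (rk_union_le M X {e}).trans (Nat.add_le_add_left (rk_singleton_le M e) _)

lemma rk_delete_of_disjoint (hXD : Disjoint X D) :
    rk (M ＼ D) X = rk M X := by
  have h : (M ＼ D).eRk X = M.eRk X := by
    rw [delete_eq_restrict, restrict_eRk_eq', ← eRk_inter_ground M X, ← inter_sdiff_assoc,
      (hXD.mono_left inter_subset_left).sdiff_eq_left]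
  exact_mod_cast (cast_rk _ X).trans (h.trans (cast_rk M X).symm)

lemma rk_contract_add (hXC : Disjoint X C) :
    rk (M ／ C) X + rk M C = rk M (X ∪ C) := by
  obtain ⟨J, hJ⟩ := M.exists_isBasis' C
  obtain ⟨I, hI, hJI⟩ := hJ.indep.subset_isBasis'_of_subset (hJ.subset.trans subset_union_right)
  have hIJ : I \ C ∪ J = I := by
    have hJ' : I ∩ C = J := (hJ.eq_of_subset_indep (hI.indep.inter_right C)
      (subset_inter hJI hJ.subset) inter_subset_right).symm
    rw [← hJ', sdiff_union_inter]
  have hIC := hI.contract_isBasis' hJ (by rw [hIJ]; exact hI.indep)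
  rw [union_sdiff_right, hXC.sdiff_eq_left] at hIC
  have h : (M ／ C).eRk X + M.eRk C = M.eRk (X ∪ C) := by
    rw [← hIC.encard_eq_eRk, ← hJ.encard_eq_eRk, ← hI.encard_eq_eRk, ← encard_union_eq, hIJ]
    exact disjoint_sdiff_left.mono_right hJ.subset
  rw [← cast_rk, ← cast_rk, ← cast_rk] at h
  exact_mod_cast h

end Rank

lemma rk_map (N : Matroid α) [N.Finite] {f : α → β} (hf : InjOn f N.E)
    (hB : B ⊆ N.E) : rk (N.map f hf) (f '' B) = rk N B := by
  exact_mod_cast (cast_rk _ _).trans ((N.eRk_map hf hB).trans (cast_rk N B).symm)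

lemma ext_rk {M₁ M₂ : Matroid α} [M₁.Finite] [M₂.Finite] (hE : M₁.E = M₂.E)
    (h : ∀ X ⊆ M₁.E, rk M₁ X = rk M₂ X) : M₁ = M₂ := by
  refine ext_indep hE fun I hI ↦ ?_
  rw [indep_iff_eRk_eq_encard, indep_iff_eRk_eq_encard, ← cast_rk, ← cast_rk, h I hI]

lemma map_eq_of_rk_image {N : Matroid α} {N' : Matroid β} [N.Finite] [N'.Finite]
    {f : α → β} (hf : InjOn f N.E) (hE : N'.E = f '' N.E)
    (h : ∀ B ⊆ N.E, rk N' (f '' B) = rk N B) : N.map f hf = N' := by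
  refine ext_rk hE.symm fun X hX ↦ ?_
  obtain ⟨B, hBN, rfl⟩ := subset_image_iff.1 hX
  rw [rk_map N hf hBN, h B hBN]

section LocalConn

noncomputable def localConn (M : Matroid α) (A B : Set α) : ℤ := rk M A + rk M B - rk M (A ∪ B)

lemma lam_eq_localConn (hX : X ⊆ M.E) : lam M X = localConn M X (M.E \ X) := by
  rw [lam, localConn, union_sdiff_cancel hX]

lemma localConn_comm (M : Matroid α) (A B : Set α) : localConn M A B = localConn M B A := by
  rw [localConn, localConn, union_comm]; ring

variable (M) [M.Finite]

lemma localConn_nonneg (A B : Set α) : 0 ≤ localConn M A B := by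
  have := rk_union_le M A B
  unfold localConn; omega

lemma localConn_mono_left {A' : Set α} (h : A ⊆ A') (B : Set α) :
    localConn M A B ≤ localConn M A' B := by
  have hsub := rk_inter_add_rk_union_le M A' (A ∪ B)
  have hA := rk_mono M (subset_inter h subset_union_left : A ⊆ A' ∩ (A ∪ B))
  rw [← union_assoc, union_eq_left.2 h] at hsub
  unfold localConn; omega

lemma localConn_mono_right {B' : Set α} (A : Set α) (h : B ⊆ B') :
    localConn M A B ≤ localConn M A B' := by
  rw [localConn_comm, localConn_comm M A]; exact localConn_mono_left M h A

lemma localConn_mono {A' B' : Set α} (hA : A ⊆ A') (hB : B ⊆ B') :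
    localConn M A B ≤ localConn M A' B' :=
  (localConn_mono_left M hA B).trans (localConn_mono_right M A' hB)

lemma localConn_sub_localConn_le {S' : Set α} (h : S ⊆ S') (Y : Set α) :
    localConn M S' Y - localConn M S Y ≤ rk M S' - rk M S := by
  have := rk_mono M (union_subset_union_left Y h)
  unfold localConn; omega

lemma localConn_add_localConn_le (hXY : Disjoint X Y) (hA : A ⊆ Y) (hS : S ⊆ X) :
    localConn M A X + localConn M S Y ≤ localConn M A S + localConn M X Y := by
  have h := rk_inter_add_rk_union_le M (S ∪ Y) (A ∪ X)
  rw [show (S ∪ Y) ∩ (A ∪ X) = A ∪ S by tauto_set,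
    show S ∪ Y ∪ (A ∪ X) = X ∪ Y by tauto_set] at h
  unfold localConn; omega

variable {M}

theorem localConn_eq_mul (hXY : Disjoint X Y) (h1 : localConn M X Y ≤ 1) (hA : A ⊆ Y)
    (hS : S ⊆ X) : localConn M A S = localConn M A X * localConn M S Y := by
  have h := localConn_add_localConn_le M hXY hA hS
  have hAS := localConn_mono_right M A hS
  have hSA := localConn_mono_right M S hA
  have hAX := localConn_mono_left M hA X
  have hSY := localConn_mono_left M hS Y
  rw [localConn_comm M S A] at hSA
  rw [localConn_comm M Y X] at hAX
  have := localConn_nonneg M A S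
  have := localConn_nonneg M A X
  obtain h0 | h0 : localConn M A X = 0 ∨ localConn M A X = 1 := by omega
  all_goals rw [h0]; omega

lemma rk_union_eq_of_localConn_le_one (hXY : Disjoint X Y) (h1 : localConn M X Y ≤ 1)
    (hA : A ⊆ Y) (hS : S ⊆ X) :
    (rk M (A ∪ S) : ℤ) = rk M A + rk M S - localConn M A X * localConn M S Y := by
  rw [← localConn_eq_mul hXY h1 hA hS, localConn]; ring

lemma rk_union_sub_rk_union_eq (hXY : Disjoint X Y) (h1 : localConn M X Y ≤ 1)
    {A₀ S₀ S' S₀' : Set α} (hA : A ⊆ Y) (hA₀ : A₀ ⊆ Y) (hS : S ⊆ X) (hS₀ : S₀ ⊆ X)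
    (hS' : S' ⊆ X) (hS₀' : S₀' ⊆ X) (hr : (rk M S : ℤ) - rk M S₀ = rk M S' - rk M S₀')
    (hc : localConn M S Y = localConn M S' Y) (hc₀ : localConn M S₀ Y = localConn M S₀' Y) :
    (rk M (A ∪ S) : ℤ) - rk M (A₀ ∪ S₀) = rk M (A ∪ S') - rk M (A₀ ∪ S₀') := by
  rw [rk_union_eq_of_localConn_le_one hXY h1 hA hS, rk_union_eq_of_localConn_le_one hXY h1 hA₀ hS₀,
    rk_union_eq_of_localConn_le_one hXY h1 hA hS',
    rk_union_eq_of_localConn_le_one hXY h1 hA₀ hS₀', hc, hc₀]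
  linarith

end LocalConn

section Minor

lemma contract_delete_isMinor_contract_delete {K R : Set α} (hKC : K ⊆ C) (hRD : R ⊆ D)
    (hCD : Disjoint C D) : M ／ C ＼ D ≤m M ／ K ＼ R := by
  refine ⟨C \ K, D, ?_⟩
  rw [contract_delete_contract_delete _ _ _ _ _ ((hCD.mono_left sdiff_subset).mono_right hRD),
    union_sdiff_cancel hKC, union_eq_right.2 hRD]

variable [M.Finite]

lemma rk_contract_delete_add (hB : B ⊆ (M ／ C ＼ D).E) :
    rk (M ／ C ＼ D) B + rk M C = rk M (B ∪ C) := by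
  obtain ⟨hBC, hBD⟩ := subset_sdiff.1 hB
  rw [rk_delete_of_disjoint _ hBD, rk_contract_add M (subset_sdiff.1 hBC).2]

lemma localConn_contract_delete_le {P Q : Set α} (X : Set α) (hP : P ⊆ (M ／ C ＼ D).E)
    (hQ : Q ⊆ (M ／ C ＼ D).E) :
    localConn (M ／ C ＼ D) P Q ≤ localConn M (P ∪ (C ∩ X)) (Q ∪ (C \ X)) := by
  have hP' := rk_contract_delete_add hP
  have hQ' := rk_contract_delete_add hQ
  have hPQ := rk_contract_delete_add (union_subset hP hQ)
  have h1 := localConn_mono_left M (subset_union_right : C ∩ X ⊆ P ∪ (C ∩ X)) (C \ X)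
  have h2 := localConn_nonneg M (Q ∪ (C \ X)) (C ∩ X)
  rw [localConn, localConn, inter_union_sdiff, union_assoc, inter_union_sdiff] at h1
  rw [localConn, union_assoc, sdiff_union_inter] at h2
  rw [localConn, localConn, show P ∪ (C ∩ X) ∪ (Q ∪ (C \ X)) = P ∪ Q ∪ C by tauto_set]
  omega

lemma lam_contract_delete_le (hX : X ⊆ M.E) (hC : C ⊆ M.E) :
    lam (M ／ C ＼ D) (X ∩ (M ／ C ＼ D).E) ≤ lam M X := by
  have hN : (M ／ C ＼ D).E ⊆ M.E := sdiff_subset.trans sdiff_subset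
  rw [lam_eq_localConn inter_subset_right, lam_eq_localConn hX]
  refine (localConn_contract_delete_le X inter_subset_right sdiff_subset).trans
    (localConn_mono M (by tauto_set) (by tauto_set))

end Minor

section Connectivity

variable [M.Finite] {u : α}

lemma lam_pos_of_connected (h : Connected M) (hX : X ⊆ M.E) (hX₀ : X.Nonempty)
    (hY₀ : (M.E \ X).Nonempty) : 0 < lam M X := by
  by_contra! hle
  exact h X ⟨⟨hX, by simpa using hle⟩, hX₀.ncard_pos (M.ground_finite.subset hX),
    hY₀.ncard_pos (M.ground_finite.subset sdiff_subset)⟩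

lemma lam_singleton_pos_of_threeConnected {N : Matroid α} [N.Finite] (h : ThreeConnected N)
    {x : α} (hx : x ∈ N.E) (hN : (N.E \ {x}).Nonempty) : 0 < lam N {x} :=
  lam_pos_of_connected (h 1 (by norm_num)) (singleton_subset_iff.2 hx) (singleton_nonempty x) hN

lemma lam_contract_sdiff (hCX : C ⊆ X) (hX : X ⊆ M.E) :
    lam (M ／ C) (X \ C) = lam M X - localConn M C (M.E \ X) := by
  have hXC := rk_contract_add M (disjoint_sdiff_left : Disjoint (X \ C) C)
  have hYC := rk_contract_add M
    (disjoint_sdiff_left.mono_left sdiff_subset : Disjoint ((M.E \ C) \ (X \ C)) C)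
  have hEC := rk_contract_add M (disjoint_sdiff_left : Disjoint (M.E \ C) C)
  rw [sdiff_union_of_subset hCX] at hXC
  rw [sdiff_union_of_subset (hCX.trans hX)] at hEC
  rw [show (M.E \ C) \ (X \ C) = M.E \ X by tauto_set] at hYC
  rw [lam, lam, localConn, contract_ground, show (M.E \ C) \ (X \ C) = M.E \ X by tauto_set,
    union_comm C]
  omega

lemma lam_delete_sdiff (hDX : D ⊆ X) (hX : X ⊆ M.E) :
    lam (M ＼ D) (X \ D) = localConn M (X \ D) (M.E \ X) := by
  rw [lam, localConn, delete_ground, show (M.E \ D) \ (X \ D) = M.E \ X by tauto_set,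
    show X \ D ∪ (M.E \ X) = M.E \ D by tauto_set, rk_delete_of_disjoint _ disjoint_sdiff_left,
    rk_delete_of_disjoint _ (by tauto_set), rk_delete_of_disjoint _ disjoint_sdiff_left]

lemma localConn_eq_zero_of_connected_contract (hX : X ⊆ M.E)
    (h1 : localConn M X (M.E \ X) ≤ 1) (hu : u ∈ X) (hXu : (X \ {u}).Nonempty)
    (hY : (M.E \ X).Nonempty) (h : Connected (M ／ {u})) :
    localConn M {u} (M.E \ X) = 0 := by
  have hu' : {u} ⊆ X := singleton_subset_iff.2 hu
  have hpos := lam_pos_of_connected h (sdiff_subset_sdiff_left hX) hXu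
    (by rwa [contract_ground, show (M.E \ {u}) \ (X \ {u}) = M.E \ X by tauto_set])
  rw [lam_contract_sdiff hu' hX, lam_eq_localConn hX] at hpos
  have := localConn_nonneg M {u} (M.E \ X)
  omega

lemma localConn_pos_of_connected_delete (hX : X ⊆ M.E) (hu : u ∈ X) (hXu : (X \ {u}).Nonempty)
    (hY : (M.E \ X).Nonempty) (h : Connected (M ＼ {u})) :
    0 < localConn M (X \ {u}) (M.E \ X) := by
  have hu' : {u} ⊆ X := singleton_subset_iff.2 hu
  rw [← lam_delete_sdiff hu' hX]
  exact lam_pos_of_connected h (sdiff_subset_sdiff_left hX) hXu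
    (by rwa [delete_ground, show (M.E \ {u}) \ (X \ {u}) = M.E \ X by tauto_set])

end Connectivity

section Replacement

variable [M.Finite]

lemma exists_localConn_jump {K W : Set α} (hWfin : W.Finite) (hKW : K ⊆ W)
    (hK : localConn M K Y = 0) (hW : 0 < localConn M W Y) :
    ∃ S x, K ⊆ S ∧ insert x S ⊆ W ∧ x ∉ S ∧ localConn M S Y = 0 ∧
      0 < localConn M (insert x S) Y := by
  set 𝒮 := {S | K ⊆ S ∧ S ⊆ W ∧ 0 < localConn M S Y}
  have h𝒮 : 𝒮.Finite := hWfin.finite_subsets.subset fun S hS ↦ hS.2.1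
  obtain ⟨T, -, hTmin⟩ := h𝒮.exists_le_minimal (show W ∈ 𝒮 from ⟨hKW, subset_rfl, hW⟩)
  obtain ⟨hKT, hTW, hT⟩ := hTmin.prop
  obtain ⟨x, hxT, hxK⟩ : ∃ x ∈ T, x ∉ K := by
    by_contra! h
    rw [(show T ⊆ K from h).antisymm hKT, hK] at hT
    exact hT.false
  refine ⟨T \ {x}, x, subset_sdiff_singleton hKT hxK, ?_, fun h ↦ h.2 rfl, ?_, ?_⟩
  · rwa [insert_sdiff_singleton, insert_eq_of_mem hxT]
  · refine le_antisymm (not_lt.1 fun hpos ↦ ?_) (localConn_nonneg M _ Y)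
    exact (hTmin.2 ⟨subset_sdiff_singleton hKT hxK, sdiff_subset.trans hTW, hpos⟩ sdiff_subset
      hxT).2 rfl
  · rwa [insert_sdiff_singleton, insert_eq_of_mem hxT]

theorem map_contract_delete_eq (hX : X ⊆ M.E) (h1 : localConn M X (M.E \ X) ≤ 1)
    (hC : C ⊆ M.E) {Z C₁ : Set α} (hZ : X ∩ (M ／ C ＼ D).E = Z) (hC₁ : C₁ ⊆ X) {f : α → α}
    (hf : InjOn f (M ／ C ＼ D).E) (hfY : EqOn f id ((M ／ C ＼ D).E \ X))
    (hfZ : f '' Z ⊆ X \ C₁)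
    (hprof : ∀ Z₀ ⊆ Z, (rk M (Z₀ ∪ (C ∩ X)) : ℤ) - rk M (C ∩ X) = rk M (f '' Z₀ ∪ C₁) - rk M C₁ ∧
      localConn M (Z₀ ∪ (C ∩ X)) (M.E \ X) = localConn M (f '' Z₀ ∪ C₁) (M.E \ X)) :
    (M ／ C ＼ D).map f hf = M ／ (C \ X ∪ C₁) ＼ (D \ X ∪ X \ (C₁ ∪ f '' Z)) := by
  have himg : ∀ B ⊆ (M ／ C ＼ D).E, f '' B = B \ X ∪ f '' (B ∩ X) := fun B hB ↦ by
    rw [← (hfY.mono (sdiff_subset_sdiff_left hB)).image_eq_self, ← image_union, sdiff_union_inter]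
  have hE : (M ／ (C \ X ∪ C₁) ＼ (D \ X ∪ X \ (C₁ ∪ f '' Z))).E = f '' (M ／ C ＼ D).E := by
    rw [himg _ subset_rfl, inter_comm, hZ, delete_ground, contract_ground, delete_ground,
      contract_ground]
    clear himg hprof hZ hfY hf h1
    tauto_set
  refine map_eq_of_rk_image hf hE fun B hB ↦ ?_
  have hBX : B ∩ X ⊆ Z := hZ ▸ fun x hx ↦ ⟨hx.2, hB hx.1⟩
  have hN := rk_contract_delete_add hB
  have hN' := rk_contract_delete_add ((image_mono hB).trans hE.symm.subset)
  obtain ⟨hr, hc⟩ := hprof _ hBX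
  obtain ⟨-, hc₀⟩ := hprof ∅ (empty_subset Z)
  simp only [image_empty, empty_union] at hc₀
  have hBE : B ⊆ M.E := hB.trans (sdiff_subset.trans sdiff_subset)
  have hfB : f '' (B ∩ X) ⊆ X \ C₁ := (image_mono hBX).trans hfZ
  have key := rk_union_sub_rk_union_eq (M := M) (A := B \ X ∪ C \ X) (A₀ := C \ X)
    disjoint_sdiff_right h1
    (union_subset (sdiff_subset_sdiff_left hBE) (sdiff_subset_sdiff_left hC))
    (sdiff_subset_sdiff_left hC)
    (union_subset inter_subset_right inter_subset_right) inter_subset_right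
    (union_subset (hfB.trans sdiff_subset) hC₁) hC₁ hr hc hc₀
  rw [union_union_union_comm, sdiff_union_inter, sdiff_union_inter,
    union_union_union_comm (B \ X), ← himg B hB] at key
  omega

lemma rk_insert_eq_of_localConn_lt {x : α}
    (h : localConn M S Y < localConn M (insert x S) Y) : rk M (insert x S) = rk M S + 1 := by
  have := localConn_sub_localConn_le M (subset_insert x S) Y
  have := rk_insert_le M x S
  omega

lemma localConn_eq_zero_and_insert_eq_one (h1 : localConn M X (M.E \ X) ≤ 1)
    (hC : C ⊆ M.E) {x : α} (hx : X ∩ (M ／ C ＼ D).E = {x}) (hN : 0 < lam (M ／ C ＼ D) {x}) :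
    localConn M (C ∩ X) (M.E \ X) = 0 ∧ localConn M (insert x (C ∩ X)) (M.E \ X) = 1 := by
  have hxX : x ∈ X := (hx.symm.subset rfl).1
  have hSX : insert x (C ∩ X) ⊆ X := insert_subset hxX inter_subset_right
  have := localConn_nonneg M (C ∩ X) (M.E \ X)
  have := localConn_mono_left M (subset_insert x (C ∩ X)) (M.E \ X)
  have := localConn_mono_left M hSX (M.E \ X)
  -- Otherwise `x` adds the same rank to every set, so it is a loop or a coloop of the minor.
  suffices localConn M (C ∩ X) (M.E \ X) ≠ localConn M (insert x (C ∩ X)) (M.E \ X) by omega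
  intro heq
  have hconst : ∀ A ⊆ M.E \ X, (rk M (A ∪ insert x (C ∩ X)) : ℤ) - rk M (A ∪ (C ∩ X)) =
      rk M (insert x (C ∩ X)) - rk M (C ∩ X) := fun A hA ↦ by
    rw [rk_union_eq_of_localConn_le_one disjoint_sdiff_right h1 hA hSX,
      rk_union_eq_of_localConn_le_one disjoint_sdiff_right h1 hA
      inter_subset_right, heq]
    ring
  have hNE : (M ／ C ＼ D).E ⊆ M.E := sdiff_subset.trans sdiff_subset
  have hNC : Disjoint (M ／ C ＼ D).E C := (subset_sdiff.1 (sdiff_subset : _ ⊆ M.E \ C)).2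
  have hsets : C \ X ∪ insert x (C ∩ X) = {x} ∪ C ∧
      (M ／ C ＼ D).E \ X ∪ C \ X ∪ insert x (C ∩ X) = (M ／ C ＼ D).E ∪ C ∧
      (M ／ C ＼ D).E \ X ∪ C \ X ∪ C ∩ X = (M ／ C ＼ D).E \ {x} ∪ C := by
    generalize (M ／ C ＼ D).E = E' at hx hNC
    clear * - hx hNC
    simp only [insert_eq]
    refine ⟨?_, ?_, ?_⟩ <;> tauto_set
  have h₁ := hconst (C \ X) (sdiff_subset_sdiff_left hC)
  have h₂ := hconst ((M ／ C ＼ D).E \ X ∪ C \ X)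
    (union_subset (sdiff_subset_sdiff_left hNE) (sdiff_subset_sdiff_left hC))
  rw [hsets.1, sdiff_union_inter] at h₁
  rw [hsets.2.1, hsets.2.2] at h₂
  have hx₁ := rk_contract_delete_add (singleton_subset_iff.2 (hx.symm.subset rfl).2)
  have hx₂ := rk_contract_delete_add (sdiff_subset : (M ／ C ＼ D).E \ {x} ⊆ _)
  have hx₃ := rk_contract_delete_add (subset_refl (M ／ C ＼ D).E)
  rw [lam] at hN
  omega

theorem exists_map_isMinor_contract_delete (hX : X ⊆ M.E) (h1 : localConn M X (M.E \ X) ≤ 1)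
    {N : Matroid α} (hNM : N ≤m M) (hXN : (X ∩ N.E).ncard ≤ 1)
    (hN : ∀ x ∈ X ∩ N.E, 0 < lam N {x}) {K W : Set α} (hKW : K ⊆ W) (hWX : W ⊆ X)
    (hK : localConn M K (M.E \ X) = 0) (hW : localConn M W (M.E \ X) = 1) :
    ∃ (f : α → α) (hf : InjOn f N.E), N.map f hf ≤m M ／ K ＼ (X \ W) := by
  classical
  obtain ⟨C, D, hC, -, hCD, rfl⟩ := hNM.exists_eq_contract_delete_disjoint
  have hminor : ∀ {C₁ T : Set α}, K ⊆ C₁ → C₁ ⊆ T → T ⊆ W →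
      M ／ (C \ X ∪ C₁) ＼ (D \ X ∪ X \ T) ≤m M ／ K ＼ (X \ W) := fun hKC₁ hC₁T hTW ↦
    contract_delete_isMinor_contract_delete (subset_union_of_subset_right hKC₁ _)
      (subset_union_of_subset_right (sdiff_subset_sdiff_right hTW) _)
      (by clear * - hCD hC₁T hTW hWX; tauto_set)
  rcases (ncard_le_one_iff_eq (M.ground_finite.subset (inter_subset_left.trans hX))).1 hXN with
    hZ | ⟨x, hZ⟩
  · set C₁ := if localConn M (C ∩ X) (M.E \ X) = 0 then K else W
    have hKC₁ : K ⊆ C₁ := by unfold C₁; split_ifs <;> simp [hKW]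
    have hC₁W : C₁ ⊆ W := by unfold C₁; split_ifs <;> simp [hKW]
    have hc : localConn M (C ∩ X) (M.E \ X) = localConn M C₁ (M.E \ X) := by
      have := localConn_mono_left M (inter_subset_right : C ∩ X ⊆ X) (M.E \ X)
      have := localConn_nonneg M (C ∩ X) (M.E \ X)
      unfold C₁; split_ifs <;> omega
    refine ⟨id, injOn_id _, ?_⟩
    rw [map_contract_delete_eq hX h1 hC hZ (hC₁W.trans hWX) (injOn_id _) (fun _ _ ↦ rfl)
      (by simp) (fun Z₀ hZ₀ ↦ by simp [subset_empty_iff.1 hZ₀, hc]), image_empty, union_empty]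
    exact hminor hKC₁ subset_rfl hC₁W
  · have hxX : x ∈ X := (hZ.symm.subset rfl).1
    obtain ⟨hc₀, hc₁⟩ := localConn_eq_zero_and_insert_eq_one h1 hC hZ (hN x (hZ ▸ rfl))
    obtain ⟨S, x', hKS, hSW, hx'S, hS₀, hS₁⟩ :=
      exists_localConn_jump (M.ground_finite.subset (hWX.trans hX)) hKW hK (hW ▸ one_pos)
    have hx'X : x' ∈ X := hWX (hSW (mem_insert x' S))
    have hS₁' : localConn M (insert x' S) (M.E \ X) = 1 :=
      le_antisymm ((localConn_mono_left M (insert_subset hx'X ((subset_insert x' S).trans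
        (hSW.trans hWX))) _).trans h1) hS₁
    refine ⟨Equiv.swap x x', (Equiv.injective _).injOn, ?_⟩
    rw [map_contract_delete_eq hX h1 hC hZ ((subset_insert x' S).trans (hSW.trans hWX))
      (Equiv.injective _).injOn
      (fun y hy ↦ Equiv.swap_apply_of_ne_of_ne (ne_of_mem_of_not_mem hxX hy.2).symm
        (ne_of_mem_of_not_mem hx'X hy.2).symm)
      (by simp [hx'X, hx'S]) ?_, image_singleton, Equiv.swap_apply_left]
    · exact hminor hKS (subset_union_left) (union_subset ((subset_insert x' S).trans hSW)
        (singleton_subset_iff.2 (hSW (mem_insert x' S))))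
    intro Z₀ hZ₀
    rcases subset_singleton_iff_eq.1 hZ₀ with rfl | rfl
    · simp [hc₀, hS₀]
    · rw [image_singleton, Equiv.swap_apply_left, singleton_union, singleton_union, hc₁, hS₁',
        rk_insert_eq_of_localConn_lt (Y := M.E \ X) (by omega),
        rk_insert_eq_of_localConn_lt (Y := M.E \ X) (by omega)]
      simp

end Replacement

section Separation

variable {N : Matroid α} {U : Set α} {u : α}

lemma IsKSeparation.ground_sdiff {k : ℕ} (h : IsKSeparation M k X) :
    IsKSeparation M k (M.E \ X) := by
  obtain ⟨⟨hX, hlam⟩, hk, hk'⟩ := h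
  refine ⟨⟨sdiff_subset, ?_⟩, hk', by rwa [sdiff_sdiff_cancel_left hX]⟩
  rw [lam, sdiff_sdiff_cancel_left hX]
  rw [lam] at hlam
  linarith

lemma IsKSeparation.localConn_le_one (h : IsKSeparation M 2 U) :
    localConn M U (M.E \ U) ≤ 1 := by
  rw [← lam_eq_localConn h.1.1]
  simpa using h.1.2

lemma IsKSeparation.ground_sdiff_nonempty (h : IsKSeparation M 2 U) : (M.E \ U).Nonempty :=
  nonempty_of_ncard_ne_zero (by have := h.2.2; omega)

lemma IsKSeparation.sdiff_singleton_nonempty (h : IsKSeparation M 2 U) (hu : u ∈ U) :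
    (U \ {u}).Nonempty :=
  nonempty_of_ncard_ne_zero (by rw [ncard_sdiff_singleton_of_mem hu]; have := h.2.1; omega)

variable [M.Finite]

lemma ThreeConnected.ncard_inter_le_one_or (hN : ThreeConnected N) (hNM : N ≤m M)
    (hX : IsKSeparation M 2 X) : (X ∩ N.E).ncard ≤ 1 ∨ ((M.E \ X) ∩ N.E).ncard ≤ 1 := by
  obtain ⟨C, D, hC, -, -, rfl⟩ := hNM.exists_eq_contract_delete_disjoint
  have hNE : (M ／ C ＼ D).E ⊆ M.E := sdiff_subset.trans sdiff_subset
  by_contra! h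
  refine hN 2 (by norm_num) (X ∩ (M ／ C ＼ D).E) ⟨⟨inter_subset_right, ?_⟩, h.1, ?_⟩
  · have := lam_contract_delete_le (D := D) hX.1.1 hC
    have := hX.1.2
    push_cast at this ⊢
    omega
  · rw [show (M ／ C ＼ D).E \ (X ∩ (M ／ C ＼ D).E) = (M.E \ X) ∩ (M ／ C ＼ D).E by
      generalize (M ／ C ＼ D).E = E' at hNE
      clear * - hNE
      tauto_set]
    exact h.2

theorem isoMinor_contract_elem (hM : Connected M) (hNM : N ≤m M) (hU : IsKSeparation M 2 U)
    (hUN : (U ∩ N.E).ncard ≤ 1) (hN : ∀ x ∈ U ∩ N.E, 0 < lam N {x}) (hu : u ∈ U)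
    (h : Connected (M ／ {u})) : IsoMinor (M ／ {u}) N := by
  have hUE := hU.1.1
  have h1 := hU.localConn_le_one
  have hUu := hU.sdiff_singleton_nonempty hu
  have hY := hU.ground_sdiff_nonempty
  have hK := localConn_eq_zero_of_connected_contract hUE h1 hu hUu hY h
  have hW : localConn M U (M.E \ U) = 1 := by
    have := lam_pos_of_connected hM hUE ⟨u, hu⟩ hY
    rw [lam_eq_localConn hUE] at this
    omega
  obtain ⟨f, hf, hmin⟩ := exists_map_isMinor_contract_delete hUE h1 hNM hUN hN
    (singleton_subset_iff.2 hu) subset_rfl hK hW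
  rw [sdiff_self, delete_empty] at hmin
  exact ⟨f, hf, hmin⟩

theorem isoMinor_delete_elem (hNM : N ≤m M) (hU : IsKSeparation M 2 U)
    (hUN : (U ∩ N.E).ncard ≤ 1) (hN : ∀ x ∈ U ∩ N.E, 0 < lam N {x}) (hu : u ∈ U)
    (h : Connected (M ＼ {u})) : IsoMinor (M ＼ {u}) N := by
  have hUE := hU.1.1
  have h1 := hU.localConn_le_one
  have hUu := hU.sdiff_singleton_nonempty hu
  have hY := hU.ground_sdiff_nonempty
  have hK : localConn M ∅ (M.E \ U) = 0 := by simp [localConn, rk_empty]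
  have hW : localConn M (U \ {u}) (M.E \ U) = 1 :=
    le_antisymm ((localConn_mono_left M sdiff_subset _).trans h1)
      (localConn_pos_of_connected_delete hUE hu hUu hY h)
  obtain ⟨f, hf, hmin⟩ := exists_map_isMinor_contract_delete hUE h1 hNM hUN hN
    (empty_subset _) sdiff_subset hK hW
  rw [sdiff_sdiff_cancel_left (singleton_subset_iff.2 hu), contract_empty] at hmin
  exact ⟨f, hf, hmin⟩

end Separation

end NDP

/-- For a 2-separation `(X, Y)` of a connected matroid `M` with a
3-connected minor `N`, some side `U` meets `E(N)` in at most one element, and for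
every `u ∈ U`, if `M/u` (resp. `M\u`) is connected then it has an `N`-minor. -/
theorem stmt12 (M N : Matroid α) [M.Finite] (hconn : NDP.Connected M)
    (hNmin : NDP.Minor N M) (hN3 : NDP.ThreeConnected N)
    (X Y : Set α) (hsep : NDP.IsKSeparation M 2 X) (hY : Y = M.E \ X) :
    ∃ U, (U = X ∨ U = Y) ∧ (U ∩ N.E).ncard ≤ 1 ∧
      ∀ u ∈ U,
        (NDP.Connected (NDP.contract M {u}) → NDP.IsoMinor (NDP.contract M {u}) N) ∧
        (NDP.Connected (NDP.delete M {u}) → NDP.IsoMinor (NDP.delete M {u}) N) := by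
  subst hY
  have hNM : N ≤m M := hNmin
  have : N.Finite := ⟨M.ground_finite.subset hNM.subset⟩
  have hpos : ∀ {U}, ∀ y ∈ N.E, y ∉ U → ∀ x ∈ U ∩ N.E, 0 < NDP.lam N {x} :=
    fun y hy hyU x hx ↦ NDP.lam_singleton_pos_of_threeConnected hN3 hx.2
      ⟨y, hy, fun h ↦ hyU (h ▸ hx.1)⟩
  obtain ⟨U, hU, hUXY, hUN, hN⟩ : ∃ U, NDP.IsKSeparation M 2 U ∧ (U = X ∨ U = M.E \ X) ∧
      (U ∩ N.E).ncard ≤ 1 ∧ ∀ x ∈ U ∩ N.E, 0 < NDP.lam N {x} := by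
    by_cases hX : X ∩ N.E = ∅
    · exact ⟨X, hsep, .inl rfl, by simp [hX], by simp [hX]⟩
    by_cases hX' : (M.E \ X) ∩ N.E = ∅
    · exact ⟨M.E \ X, hsep.ground_sdiff, .inr rfl, by simp [hX'], by simp [hX']⟩
    obtain ⟨x, hxX, hxN⟩ := nonempty_iff_ne_empty.2 hX
    obtain ⟨y, hyX, hyN⟩ := nonempty_iff_ne_empty.2 hX'
    rcases hN3.ncard_inter_le_one_or hNM hsep with h | h
    · exact ⟨X, hsep, .inl rfl, h, hpos y hyN hyX.2⟩
    · exact ⟨M.E \ X, hsep.ground_sdiff, .inr rfl, h, hpos x hxN fun h ↦ h.2 hxX⟩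
  exact ⟨U, hUXY, hUN, fun u hu ↦ ⟨NDP.isoMinor_contract_elem hconn hNM hU hUN hN hu,
    NDP.isoMinor_delete_elem hNM hU hUN hN hu⟩⟩
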